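/- Let 𝒯 be a class of topological spaces closed under homeomorphic images and satisfying (W1)–(W3), and suppose 𝒯 satisfies (S) with respect to a class 𝒮 and infinite cardinal κ: a nonempty product ∏_{i∈I} X_i belongs to 𝒯 iff I can be partitioned as J ∪ K with |J| < κ, ∏_{i∈J} X_i ∈ 𝒯 and ∏_{i∈K} X_i ∈ 𝒮, where 𝒮 is closed under homeomorphic images and under cofinite subproducts. Then a nonempty product X = ∏_{i∈I} X_i is a local 𝒯-space if and only if: (a) all subproducts of X by fewer than κ factors are local 𝒯-spaces, and (b) I can be partitioned as H ∪ K with |H| < κ and ∏_{i∈K} X_i ∈ 𝒮. -/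

import Mathlib

universe u

def IsLocalT (T : ∀ (X : Type u) [TopologicalSpace X], Prop)
    (X : Type u) [TopologicalSpace X] : Prop :=
  ∀ x : X, ∀ U ∈ nhds x, ∃ V ∈ nhds x, V ⊆ U ∧ T ↥V

def IsLocal1T (T : ∀ (X : Type u) [TopologicalSpace X], Prop)
    (X : Type u) [TopologicalSpace X] : Prop :=
  ∀ x : X, ∃ V ∈ nhds x, T ↥V

def ClosedUnderHomeo (T : ∀ (X : Type u) [TopologicalSpace X], Prop) : Prop :=
  ∀ (X Y : Type u) [TopologicalSpace X] [TopologicalSpace Y], T X → (X ≃ₜ Y) → T Y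

def PropW2 (T : ∀ (X : Type u) [TopologicalSpace X], Prop) : Prop :=
  ∀ (A B : Type u) [TopologicalSpace A] [TopologicalSpace B] (a : A) (b : B)
    (S : Set (A × B)), S ∈ nhds (a, b) → T ↥S → ∃ s : Set A, s ∈ nhds a ∧ T ↥s

def PropW3 (T : ∀ (X : Type u) [TopologicalSpace X], Prop) : Prop :=
  ∀ (A B : Type u) [TopologicalSpace A] [TopologicalSpace B], Nonempty A → Nonempty B →
    ∀ (Bo : Set B), Bo.Nonempty → IsOpen Bo →
    ∀ (S : Set (A × B)), (Set.univ ×ˢ Bo) ⊆ S → T ↥S → T A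

open Topology

noncomputable def embImageHomeo {X Y : Type u} [TopologicalSpace X] [TopologicalSpace Y] {f : X → Y}
    (hf : IsEmbedding f) (s : Set X) : ↥s ≃ₜ ↥(f '' s) where
  toEquiv := Equiv.Set.image f s hf.injective
  continuous_toFun := by
    apply Continuous.subtype_mk
    exact hf.continuous.comp continuous_subtype_val
  continuous_invFun := by
    show Continuous ((Equiv.Set.image f s hf.injective).symm)
    have hemb : IsEmbedding (fun x : ↥s => f x) := hf.comp IsEmbedding.subtypeVal
    rw [hemb.toIsInducing.continuous_iff]
    have h : (fun x : ↥s => f x) ∘ ((Equiv.Set.image f s hf.injective).symm) = Subtype.val := by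
      funext y
      have := (Equiv.Set.image f s hf.injective).apply_symm_apply y
      simpa [Equiv.Set.image, Equiv.Set.imageOfInjOn] using congrArg Subtype.val this
    exact h ▸ continuous_subtype_val

noncomputable def piOptionHomeo {α : Type u} (Y : Option α → Type u) [∀ o, TopologicalSpace (Y o)] :
    (∀ o, Y o) ≃ₜ Y none × (∀ a, Y (some a)) where
  toEquiv := Equiv.piOptionEquivProd
  continuous_toFun := by
    show Continuous fun f : ∀ o, Y o => ((f none, fun a => f (some a)) : Y none × ∀ a, Y (some a))
    exact (continuous_apply none).prodMk (continuous_pi fun a => continuous_apply (some a))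
  continuous_invFun := by
    show Continuous fun p : Y none × (∀ a, Y (some a)) => (fun o => Option.rec p.1 p.2 o : ∀ o, Y o)
    refine continuous_pi fun o => ?_
    cases o with
    | none => exact continuous_fst
    | some a => exact (continuous_apply a).comp continuous_snd

noncomputable def piUniqueHomeo {ι : Type u} [Unique ι] (Y : ι → Type u) [∀ i, TopologicalSpace (Y i)] :
    (∀ i, Y i) ≃ₜ Y default where
  toEquiv := Equiv.piUnique Y
  continuous_toFun := continuous_apply default
  continuous_invFun := by
    refine continuous_pi fun i => ?_
    have h : i = default := Unique.eq_default i
    subst h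
    simp [Equiv.piUnique]
    exact continuous_id

theorem forwardA (T : ∀ (X : Type u) [TopologicalSpace X], Prop)
    (hHomeo : ClosedUnderHomeo T) (hW2 : PropW2 T)
    (I : Type u) (X : I → Type u) [∀ i, TopologicalSpace (X i)]
    (hne : Nonempty (∀ i, X i)) (hL : IsLocalT T (∀ i, X i)) (J : Set I) :
    IsLocalT T (∀ j : J, X j.1) := by
  classical
  intro y U hU
  set U' := interior U with hU'def
  have hU'open : IsOpen U' := isOpen_interior
  have hyU' : y ∈ U' := mem_interior_iff_mem_nhds.mpr hU
  obtain ⟨z⟩ := hne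
  set x : ∀ i, X i := fun i => if h : i ∈ J then y ⟨i, h⟩ else z i with hxdef
  set e := Homeomorph.piEquivPiSubtypeProd (· ∈ J) X with hedef
  have hxy : (fun j : J => x j.1) = y := by
    funext j
    simp only [hxdef, dif_pos j.2]
  set π : (∀ i, X i) → (∀ j : J, X j.1) := fun f j => f j.1 with hπdef
  have hπcont : Continuous π := continuous_pi fun j => continuous_apply j.1
  set W := π ⁻¹' U' with hWdef
  have hWnhds : W ∈ nhds x := by
    apply hπcont.continuousAt.preimage_mem_nhds
    have : π x = y := hxy
    rw [this]
    exact hU'open.mem_nhds hyU'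
  obtain ⟨V, hVnhds, hVW, hTV⟩ := hL x W hWnhds
  set w : ∀ k : {i // ¬ i ∈ J}, X k.1 := fun k => x k.1 with hwdef
  have hex : e x = (y, w) := by
    refine Prod.ext ?_ rfl
    exact hxy
  set q : ↥U' × (∀ k : {i // ¬ i ∈ J}, X k.1) → (∀ j : J, X j.1) × (∀ k : {i // ¬ i ∈ J}, X k.1) :=
    Prod.map Subtype.val id with hqdef
  have hqemb : IsEmbedding q := IsEmbedding.subtypeVal.prodMap IsEmbedding.id
  set S0 := q ⁻¹' (e '' V) with hS0def
  have heV : (e : (∀ i, X i) → _) '' V ∈ nhds (y, w) := by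
    rw [← hex]
    have himg : ⇑e '' V = ⇑e.symm ⁻¹' V := e.toEquiv.image_eq_preimage_symm V
    rw [himg]
    apply e.symm.continuous.continuousAt.preimage_mem_nhds
    rwa [Homeomorph.symm_apply_apply]
  have hS0nhds : S0 ∈ nhds ((⟨y, hyU'⟩ : ↥U'), w) := by
    apply (hqemb.continuous.continuousAt).preimage_mem_nhds
    exact heV
  have heVsub : (e : (∀ i, X i) → _) '' V ⊆ U' ×ˢ Set.univ := by
    rintro p ⟨v, hv, rfl⟩
    refine ⟨?_, trivial⟩
    exact hVW hv
  have hqimg : q '' S0 = (e : (∀ i, X i) → _) '' V := by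
    rw [hS0def, Set.image_preimage_eq_inter_range]
    rw [hqdef, Set.range_prodMap, Subtype.range_val, Set.range_id]
    exact Set.inter_eq_self_of_subset_left heVsub
  have hTS0 : T ↥S0 := by
    have h1 : T ↥((e : (∀ i, X i) → _) '' V) := hHomeo _ _ hTV (Homeomorph.image e V)
    have h2 : T ↥(q '' S0) := hHomeo _ _ h1 (Homeomorph.setCongr hqimg.symm)
    exact hHomeo _ _ h2 (embImageHomeo hqemb S0).symm
  obtain ⟨s, hsnhds, hTs⟩ := hW2 _ _ ⟨y, hyU'⟩ w S0 hS0nhds hTS0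
  refine ⟨Subtype.val '' s, ?_, ?_, ?_⟩
  · have := hU'open.isOpenEmbedding_subtypeVal.map_nhds_eq (⟨y, hyU'⟩ : ↥U')
    rw [← this]
    exact Filter.image_mem_map hsnhds
  · exact (Subtype.coe_image_subset U' s).trans interior_subset
  · exact hHomeo _ _ hTs (embImageHomeo IsEmbedding.subtypeVal s)

theorem forwardB (T S : ∀ (X : Type u) [TopologicalSpace X], Prop)
    (hHomeo : ClosedUnderHomeo T) (hW3 : PropW3 T)
    (κ : Cardinal.{u}) (hκ : Cardinal.aleph0 ≤ κ)
    (hSHomeo : ClosedUnderHomeo S)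
    (hS : ∀ (ι : Type u) (Y : ι → Type u) [∀ i, TopologicalSpace (Y i)],
      Nonempty (∀ i, Y i) →
      (T (∀ i, Y i) ↔
        ∃ J : Set ι, Cardinal.mk ↥J < κ ∧ T (∀ j : J, Y j.1) ∧
          S (∀ k : ↥Jᶜ, Y k.1)))
    (I : Type u) (X : I → Type u) [∀ i, TopologicalSpace (X i)]
    (hne : Nonempty (∀ i, X i)) (hL : IsLocalT T (∀ i, X i)) :
    ∃ H : Set I, Cardinal.mk ↥H < κ ∧ S (∀ k : ↥Hᶜ, X k.1) := by
  classical
  obtain ⟨z⟩ := hne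
  obtain ⟨V, hVnhds, -, hTV⟩ := hL z Set.univ Filter.univ_mem
  rw [nhds_pi] at hVnhds
  obtain ⟨Fi, t, ht, hsub⟩ := Filter.mem_pi'.mp hVnhds
  set O : ∀ i, Set (X i) := fun i => interior (t i) with hOdef
  have hzO : ∀ i, z i ∈ O i := fun i => mem_interior_iff_mem_nhds.mpr (ht i)
  have hpiO : Set.pi ↑Fi O ⊆ V := le_trans (Set.pi_mono fun i _ => interior_subset) hsub
  set F' : Set I := ↑Fi with hF'def
  set e2 := (Homeomorph.piEquivPiSubtypeProd (· ∈ F') X).trans (Homeomorph.prodComm _ _) with he2def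
  set Bo : Set (∀ j : {x // x ∈ F'}, X j.1) := Set.pi Set.univ (fun j => O j.1) with hBodef
  have hBoNe : Bo.Nonempty := ⟨fun j => z j.1, fun j _ => hzO j.1⟩
  have hBoOpen : IsOpen Bo := isOpen_set_pi Set.finite_univ (fun j _ => isOpen_interior)
  have hsub2 : (Set.univ ×ˢ Bo) ⊆ (e2 : (∀ i, X i) → _) '' V := by
    rintro ⟨a, g⟩ ⟨-, hg⟩
    refine ⟨e2.symm (a, g), ?_, e2.apply_symm_apply _⟩
    apply hpiO
    intro i hi
    have hv : e2.symm (a, g) i = g ⟨i, hi⟩ := by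
      simp [he2def, Homeomorph.piEquivPiSubtypeProd, Equiv.piEquivPiSubtypeProd, hi]
    rw [hv]
    exact hg ⟨i, hi⟩ trivial
  have hTA : T (∀ k : {x // ¬ x ∈ F'}, X k.1) := by
    refine hW3 (∀ k : {x // ¬ x ∈ F'}, X k.1) (∀ j : {x // x ∈ F'}, X j.1)
      ⟨fun k => z k.1⟩ ⟨fun j => z j.1⟩ Bo hBoNe hBoOpen _ hsub2 ?_
    exact hHomeo _ _ hTV (Homeomorph.image e2 V)
  obtain ⟨J, hJκ, -, hSJ⟩ := (hS {x // ¬ x ∈ F'} (fun k => X k.1) ⟨fun k => z k.1⟩).mp hTA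
  refine ⟨F' ∪ Subtype.val '' J, ?_, ?_⟩
  · have h1 : Cardinal.mk ↥F' < κ :=
      lt_of_lt_of_le (Cardinal.mk_lt_aleph0_iff.mpr inferInstance) hκ
    have h2 : Cardinal.mk ↥(Subtype.val '' J) < κ := by
      rw [Cardinal.mk_image_eq Subtype.val_injective]
      exact hJκ
    exact lt_of_le_of_lt (Cardinal.mk_union_le _ _) (Cardinal.add_lt_of_lt hκ h1 h2)
  · set H : Set I := F' ∪ Subtype.val '' J with hHdef
    refine hSHomeo _ _ hSJ (Homeomorph.piCongrLeft (Y := fun h : ↥Hᶜ => X h.1)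
      ({ toFun := fun k => ⟨k.1.1, by
            intro hmem
            rcases hmem with hF | ⟨a, haJ, hval⟩
            · exact k.1.2 hF
            · exact k.2 (by rwa [Subtype.ext hval] at haJ)⟩
         invFun := fun h => ⟨⟨h.1, fun hF => h.2 (Set.mem_union_left _ hF)⟩,
           fun hJ' => h.2 (Set.mem_union_right _ ⟨_, hJ', rfl⟩)⟩
         left_inv := fun _ => rfl
         right_inv := fun _ => rfl } : ↥Jᶜ ≃ ↥Hᶜ))

def someEquiv (α : Type u) : α ≃ ↥(({none} : Set (Option α))ᶜ) where
  toFun a := ⟨some a, fun h => Option.some_ne_none a (Set.mem_singleton_iff.mp h)⟩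
  invFun o := o.1.get (Option.isSome_iff_ne_none.mpr o.2)
  left_inv a := rfl
  right_inv o := Subtype.ext (Option.some_get _)

def OY {I : Type u} (X : I → Type u) {G : Set I} (V : Set (∀ j : G, X j.1)) :
    Option ↥Gᶜ → Type u
  | none => ↥V
  | some k => X k.1

instance instOY {I : Type u} (X : I → Type u) [∀ i, TopologicalSpace (X i)] {G : Set I}
    (V : Set (∀ j : G, X j.1)) : ∀ o, TopologicalSpace (OY X V o)
  | none => inferInstanceAs (TopologicalSpace ↥V)
  | some k => inferInstanceAs (TopologicalSpace (X k.1))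

theorem prodT (T S : ∀ (X : Type u) [TopologicalSpace X], Prop)
    (hHomeo : ClosedUnderHomeo T) (hSHomeo : ClosedUnderHomeo S)
    (κ : Cardinal.{u}) (hκ : Cardinal.aleph0 ≤ κ)
    (hS : ∀ (ι : Type u) (Y : ι → Type u) [∀ i, TopologicalSpace (Y i)],
      Nonempty (∀ i, Y i) →
      (T (∀ i, Y i) ↔
        ∃ J : Set ι, Cardinal.mk ↥J < κ ∧ T (∀ j : J, Y j.1) ∧
          S (∀ k : ↥Jᶜ, Y k.1)))
    {I : Type u} (X : I → Type u) [∀ i, TopologicalSpace (X i)]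
    (hXne : ∀ i, Nonempty (X i)) (G : Set I) (V : Set (∀ j : G, X j.1))
    (hVne : V.Nonempty) (hTV : T ↥V) (hSG : S (∀ k : ↥Gᶜ, X k.1)) :
    T (↥V × ∀ k : ↥Gᶜ, X k.1) := by
  classical
  obtain ⟨v, hv⟩ := hVne
  have hne' : Nonempty (∀ o, OY X V o) :=
    ⟨fun o => Option.rec (motive := fun o => OY X V o) (⟨v, hv⟩ : ↥V)
      (fun k => (hXne k.1).some) o⟩
  have hT : T (∀ o, OY X V o) := by
    refine (hS (Option ↥Gᶜ) (OY X V) hne').mpr ⟨{none}, ?_, ?_, ?_⟩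
    · rw [Cardinal.mk_singleton]
      exact lt_of_lt_of_le Cardinal.one_lt_aleph0 hκ
    · letI : Unique ↥({none} : Set (Option ↥Gᶜ)) :=
        ⟨⟨⟨none, rfl⟩⟩, fun x => Subtype.ext x.2⟩
      exact hHomeo _ _ hTV (piUniqueHomeo (fun j : ↥({none} : Set (Option ↥Gᶜ)) => OY X V j.1)).symm
    · exact hSHomeo _ _ hSG
        (Homeomorph.piCongrLeft (Y := fun k : ↥(({none} : Set (Option ↥Gᶜ))ᶜ) => OY X V k.1)
          (someEquiv ↥Gᶜ))
  exact hHomeo _ _ hT (piOptionHomeo (OY X V))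

theorem backward (T S : ∀ (X : Type u) [TopologicalSpace X], Prop)
    (hHomeo : ClosedUnderHomeo T) (hSHomeo : ClosedUnderHomeo S)
    (κ : Cardinal.{u}) (hκ : Cardinal.aleph0 ≤ κ)
    (hSCofin : ∀ (ι : Type u) (Y : ι → Type u) [∀ i, TopologicalSpace (Y i)],
      S (∀ i, Y i) → ∀ F : Finset ι, S (∀ i : {i : ι // i ∉ F}, Y i.1))
    (hS : ∀ (ι : Type u) (Y : ι → Type u) [∀ i, TopologicalSpace (Y i)],
      Nonempty (∀ i, Y i) →
      (T (∀ i, Y i) ↔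
        ∃ J : Set ι, Cardinal.mk ↥J < κ ∧ T (∀ j : J, Y j.1) ∧
          S (∀ k : ↥Jᶜ, Y k.1)))
    (I : Type u) (X : I → Type u) [∀ i, TopologicalSpace (X i)]
    (hne : Nonempty (∀ i, X i))
    (hA : ∀ J : Set I, Cardinal.mk ↥J < κ → IsLocalT T (∀ j : J, X j.1))
    (H : Set I) (hHκ : Cardinal.mk ↥H < κ) (hSH : S (∀ k : ↥Hᶜ, X k.1)) :
    IsLocalT T (∀ i, X i) := by
  classical
  have hXne : ∀ i, Nonempty (X i) := fun i => ⟨hne.some i⟩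
  intro x U hU
  rw [nhds_pi] at hU
  obtain ⟨Fi, t, ht, hsub⟩ := Filter.mem_pi'.mp hU
  set O : ∀ i, Set (X i) := fun i => interior (t i) with hOdef
  have hxO : ∀ i, x i ∈ O i := fun i => mem_interior_iff_mem_nhds.mpr (ht i)
  set G : Set I := H ∪ ↑Fi with hGdef
  have hGκ : Cardinal.mk ↥G < κ := by
    have h2 : Cardinal.mk ↥(↑Fi : Set I) < κ :=
      lt_of_lt_of_le (Cardinal.mk_lt_aleph0_iff.mpr inferInstance) hκ
    exact lt_of_le_of_lt (Cardinal.mk_union_le _ _) (Cardinal.add_lt_of_lt hκ hHκ h2)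
  -- S of the complement of G
  have hFin : ({k : ↥Hᶜ | k.1 ∈ Fi} : Set ↥Hᶜ).Finite := by
    apply Set.Finite.preimage (Set.injOn_of_injective Subtype.val_injective) (Fi.finite_toSet)
  have hSG : S (∀ k : ↥Gᶜ, X k.1) := by
    have h1 := hSCofin _ _ hSH hFin.toFinset
    refine hSHomeo _ _ h1 (Homeomorph.piCongrLeft (Y := fun g : ↥Gᶜ => X g.1)
      ({ toFun := fun k => ⟨k.1.1, by
            intro hmem
            rcases hmem with hH | hFi'
            · exact k.1.2 hH
            · exact k.2 (hFin.mem_toFinset.mpr hFi')⟩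
         invFun := fun g => ⟨⟨g.1, fun hH => g.2 (Set.mem_union_left _ hH)⟩,
           fun hF => g.2 (Set.mem_union_right _ (hFin.mem_toFinset.mp hF))⟩
         left_inv := fun _ => rfl
         right_inv := fun _ => rfl } : {k : ↥Hᶜ // k ∉ hFin.toFinset} ≃ ↥Gᶜ))
  -- local T on the G-subproduct
  set y : ∀ j : G, X j.1 := fun j => x j.1 with hydef
  set UG : Set (∀ j : G, X j.1) := Set.pi {j : ↥G | j.1 ∈ Fi} (fun j => O j.1) with hUGdef
  have hUGfin : ({j : ↥G | j.1 ∈ Fi} : Set ↥G).Finite := by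
    apply Set.Finite.preimage (Set.injOn_of_injective Subtype.val_injective) (Fi.finite_toSet)
  have hUGopen : IsOpen UG := isOpen_set_pi hUGfin (fun j _ => isOpen_interior)
  have hyUG : y ∈ UG := fun j _ => hxO j.1
  obtain ⟨VG, hVGnhds, hVGsub, hTVG⟩ := hA G hGκ y UG (hUGopen.mem_nhds hyUG)
  have hVGne : VG.Nonempty := ⟨y, mem_of_mem_nhds hVGnhds⟩
  have hTprod : T (↥VG × ∀ k : ↥Gᶜ, X k.1) :=
    prodT T S hHomeo hSHomeo κ hκ hS X hXne G VG hVGne hTVG hSG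
  set e := Homeomorph.piEquivPiSubtypeProd (· ∈ G) X with hedef
  refine ⟨e ⁻¹' (VG ×ˢ Set.univ), ?_, ?_, ?_⟩
  · apply e.continuous.continuousAt.preimage_mem_nhds
    have hex : e x = (y, fun k : {i // ¬ i ∈ G} => x k.1) := rfl
    rw [hex]
    exact prod_mem_nhds hVGnhds Filter.univ_mem
  · intro v hv
    have h1 : (fun j : G => v j.1) ∈ VG := hv.1
    apply hsub
    intro i hi
    have hiG : i ∈ G := Set.mem_union_right _ hi
    have := hVGsub h1 ⟨i, hiG⟩ hi
    exact interior_subset this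
  · have himg : (e : (∀ i, X i) → _) '' (e ⁻¹' (VG ×ˢ Set.univ)) = VG ×ˢ Set.univ := by
      apply Set.image_preimage_eq_of_subset
      rw [Homeomorph.range_coe]
      exact Set.subset_univ _
    have h1 := Homeomorph.image e (e ⁻¹' (VG ×ˢ Set.univ))
    have h2 := Homeomorph.setCongr himg
    have h3 := Homeomorph.Set.prod VG (Set.univ : Set (∀ k : {i // ¬ i ∈ G}, X k.1))
    have h4 := (Homeomorph.refl ↥VG).prodCongr (Homeomorph.Set.univ (∀ k : {i // ¬ i ∈ G}, X k.1))
    exact hHomeo _ _ hTprod (h1.trans ((h2.trans h3).trans h4)).symm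

theorem stmt18 (T S : ∀ (X : Type u) [TopologicalSpace X], Prop)
    (hHomeo : ClosedUnderHomeo T) (hW2 : PropW2 T) (hW3 : PropW3 T)
    (κ : Cardinal.{u}) (hκ : Cardinal.aleph0 ≤ κ)
    (hSHomeo : ClosedUnderHomeo S)
    (hSCofin : ∀ (ι : Type u) (Y : ι → Type u) [∀ i, TopologicalSpace (Y i)],
      S (∀ i, Y i) → ∀ F : Finset ι, S (∀ i : {i : ι // i ∉ F}, Y i.1))
    (hS : ∀ (ι : Type u) (Y : ι → Type u) [∀ i, TopologicalSpace (Y i)],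
      Nonempty (∀ i, Y i) →
      (T (∀ i, Y i) ↔
        ∃ J : Set ι, Cardinal.mk ↥J < κ ∧ T (∀ j : J, Y j.1) ∧
          S (∀ k : ↥Jᶜ, Y k.1)))
    (I : Type u) (X : I → Type u) [∀ i, TopologicalSpace (X i)]
    (hne : Nonempty (∀ i, X i)) :
    IsLocalT T (∀ i, X i) ↔
      ((∀ J : Set I, Cardinal.mk ↥J < κ → IsLocalT T (∀ j : J, X j.1)) ∧
       ∃ H : Set I, Cardinal.mk ↥H < κ ∧ S (∀ k : ↥Hᶜ, X k.1)) := by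
  constructor
  · intro hL
    refine ⟨fun J _ => forwardA T hHomeo hW2 I X hne hL J, ?_⟩
    exact forwardB T S hHomeo hW3 κ hκ hSHomeo hS I X hne hL
  · rintro ⟨hA, H, hHκ, hSH⟩
    exact backward T S hHomeo hSHomeo κ hκ hSCofin hS I X hne hA H hHκ hSH
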